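/- arXiv:2203.08046 — 2 statements merged into one kernel-verified Lean document; each statement's English description precedes it below -/
import Mathlib

section
/- Let the EMI be a single plane wave from direction (φ̄, θ̄) equal to the source direction, so R = a a^H with a_n = e^{i k(φ̄,θ̄)^T u_n} and h_sr = √β_sr · a. Then for the phase configuration Φ maximizing |h_rd^T Φ h_sr| (i.e., φ_n = −arg([h_sr]_n [h_rd]_n)), the EMI term satisfies ‖h_rd^T Φ R^{1/2}‖² = |h_rd^T Φ h_sr|² / β_sr, i.e., the EMI is beamformed toward the destination exactly like the desired signal, and the SINR is upper bounded by p β_sr / σ_emi² regardless of N. -/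
/-!
The EMI covariance `R = S S = a aᴴ` has rank one, so for any combining vector `w` the EMI power
`‖w S‖²` collapses to `|w ⬝ a|²`. Since `h_sr = √β_sr a`, the received signal power is
`β_sr |w ⬝ a|²` with the same `w = h_rdᵀ Φ`, for every phase configuration `Φ`; the SINR is then
`p β_sr t / (σ_emi² t + σ²)` with `t = |w ⬝ a|²`, which never exceeds `p β_sr / σ_emi²`.
-/

open Matrix ComplexOrder Finset Real

section

variable {𝕜 n : Type*} [RCLike 𝕜] [Fintype n]

theorem ofReal_sum_norm_sq (v : n → 𝕜) : ((∑ i, ‖v i‖ ^ 2 : ℝ) : 𝕜) = v ⬝ᵥ star v := by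
  simp [dotProduct, RCLike.mul_conj]

theorem sum_norm_sq_vecMul_of_mul_conjTranspose_eq_vecMulVec {S : Matrix n n 𝕜} {a : n → 𝕜}
    (hS : S * Sᴴ = vecMulVec a (star a)) (w : n → 𝕜) :
    ∑ i, ‖(w ᵥ* S) i‖ ^ 2 = ‖w ⬝ᵥ a‖ ^ 2 := by
  have h : (w ᵥ* S) ⬝ᵥ star (w ᵥ* S) = (w ⬝ᵥ a) * star (w ⬝ᵥ a) := by
    rw [star_vecMul, dotProduct_mulVec, vecMul_vecMul, hS, vecMul_vecMulVec, smul_dotProduct,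
      ← star_dotProduct_star, smul_eq_mul, dotProduct_comm (star a)]
  apply RCLike.ofReal_injective (K := 𝕜)
  rw [ofReal_sum_norm_sq, h, RCLike.star_def, RCLike.mul_conj, RCLike.ofReal_pow]

end

theorem norm_dotProduct_mulVec_sqrt_smul_sq {n : Type*} [Fintype n] (v : n → ℂ)
    (M : Matrix n n ℂ) (a : n → ℂ) {β : ℝ} (hβ : 0 ≤ β) :
    ‖v ⬝ᵥ M *ᵥ (fun i => (√β : ℂ) * a i)‖ ^ 2 = β * ‖(v ᵥ* M) ⬝ᵥ a‖ ^ 2 := by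
  change ‖v ⬝ᵥ M *ᵥ ((√β : ℂ) • a)‖ ^ 2 = _
  rw [mulVec_smul, dotProduct_smul, dotProduct_mulVec, smul_eq_mul, norm_mul, mul_pow,
    Complex.norm_real, norm_of_nonneg (sqrt_nonneg β), sq_sqrt hβ]

theorem mul_div_mul_add_le_div {c σ σ' t : ℝ} (hc : 0 ≤ c) (hσ : 0 < σ) (hσ' : 0 ≤ σ')
    (ht : 0 ≤ t) : c * t / (σ * t + σ') ≤ c / σ := by
  rcases ht.eq_or_lt with rfl | ht
  · simp only [mul_zero, zero_div]; positivity
  calc c * t / (σ * t + σ') ≤ c * t / (σ * t) :=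
        div_le_div_of_nonneg_left (by positivity) (by positivity) (by linarith)
    _ = c / σ := mul_div_mul_right c σ ht.ne'

/-- Rank-one EMI from the source direction: with `R = a aᴴ`, `h_sr = √β_sr a`, and the
signal-maximizing phase configuration `Φ`, the EMI term satisfies
`‖h_rd^T Φ R^{1/2}‖² = |h_rd^T Φ h_sr|²/β_sr`, so the SINR is at most `p β_sr/σ_emi²`. -/
theorem rank_one_emi_source_aligned {N : ℕ} (a h_rd : Fin N → ℂ) (βsr : ℝ) (hβsr : 0 < βsr)
    (S : Matrix (Fin N) (Fin N) ℂ) (hS : S.PosSemidef)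
    (hS2 : S * S = vecMulVec a (star a)) :
    (∑ i, ‖(h_rd ᵥ* (Matrix.diagonal (fun n =>
          Complex.exp (Complex.I * (-(Complex.arg (((Real.sqrt βsr : ℂ) * a n) * h_rd n)))))
        * S)) i‖ ^ 2)
      = ‖h_rd ⬝ᵥ (Matrix.diagonal (fun n =>
          Complex.exp (Complex.I * (-(Complex.arg (((Real.sqrt βsr : ℂ) * a n) * h_rd n)))))).mulVec
            (fun n => (Real.sqrt βsr : ℂ) * a n)‖ ^ 2 / βsr ∧
    ∀ p σemi2 σ2 : ℝ, 0 ≤ p → 0 < σemi2 → 0 ≤ σ2 →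
      p * ‖h_rd ⬝ᵥ (Matrix.diagonal (fun n =>
            Complex.exp (Complex.I * (-(Complex.arg (((Real.sqrt βsr : ℂ) * a n) * h_rd n)))))).mulVec
              (fun n => (Real.sqrt βsr : ℂ) * a n)‖ ^ 2
          / (σemi2 * (∑ i, ‖(h_rd ᵥ* (Matrix.diagonal (fun n =>
              Complex.exp (Complex.I * (-(Complex.arg (((Real.sqrt βsr : ℂ) * a n) * h_rd n)))))
            * S)) i‖ ^ 2) + σ2)
        ≤ p * βsr / σemi2 := by
  set Φ : Matrix (Fin N) (Fin N) ℂ := diagonal fun n =>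
    Complex.exp (Complex.I * (-(Complex.arg (((√βsr : ℂ) * a n) * h_rd n))))
  have hemi : ∑ i, ‖(h_rd ᵥ* (Φ * S)) i‖ ^ 2 = ‖(h_rd ᵥ* Φ) ⬝ᵥ a‖ ^ 2 := by
    rw [← vecMul_vecMul]
    exact sum_norm_sq_vecMul_of_mul_conjTranspose_eq_vecMulVec (by rwa [hS.1.eq]) _
  rw [hemi, norm_dotProduct_mulVec_sqrt_smul_sq _ _ _ hβsr.le]
  refine ⟨by field_simp, fun p σemi2 σ2 hp hσemi hσ2 => ?_⟩
  rw [← mul_assoc]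
  exact mul_div_mul_add_le_div (by positivity) hσemi hσ2 (sq_nonneg _)
end

section
/- Let α₂ > 0 and α₁(σ_emi²) = β_sr/(σ_emi² + σ²) with β_sr, σ² > 0. Then for any fixed R̄ > 0, the minimal total power p*(σ_emi²) = min_{τ∈(0,1)} [τ(2^{R̄/τ}−1)/α₁(σ_emi²) + (1−τ)(2^{R̄/(1−τ)}−1)/α₂] is strictly increasing and unbounded in σ_emi², and p*(σ_emi²) ≥ σ_emi² · (min_{τ} τ(2^{R̄/τ}−1))/β_sr grows at least linearly in σ_emi². -/
open Real Filter

/-!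
With `g(τ) = τ(2^{R̄/τ} − 1)`, every candidate power is affine in the EMI power `s`, with slope
`g(τ)/β_sr` and a nonnegative intercept. Since `2^x − 1 ≥ x log 2`, all slopes are at least
`R̄ log 2 / β_sr > 0`, and an infimum of affine functions whose slopes are uniformly bounded below
by `c` grows at least like `c s`: strictly, and without bound.
-/

section AffineFamily

variable {ι : Type*} [Nonempty ι] {a b : ι → ℝ} {c : ℝ}

theorem mul_le_iInf_affine (ha : ∀ i, c ≤ a i) (hb : ∀ i, 0 ≤ b i) {x : ℝ} (hx : 0 ≤ x) :
    c * x ≤ ⨅ i, a i * x + b i :=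
  le_ciInf fun i => by nlinarith [ha i, hb i]

theorem strictMonoOn_iInf_affine (hc : 0 < c) (ha : ∀ i, c ≤ a i) (hb : ∀ i, 0 ≤ b i) :
    StrictMonoOn (fun x => ⨅ i, a i * x + b i) (Set.Ici 0) := by
  intro x hx y _ hxy
  have hbdd : BddBelow (Set.range fun i => a i * x + b i) :=
    ⟨0, by
      rintro _ ⟨i, rfl⟩
      exact add_nonneg (mul_nonneg (hc.le.trans (ha i)) hx) (hb i)⟩
  calc (⨅ i, a i * x + b i) < (⨅ i, a i * x + b i) + c * (y - x) := by
        linarith [mul_pos hc (sub_pos.2 hxy)]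
    _ ≤ ⨅ i, a i * y + b i := le_ciInf fun i => by
        have := ciInf_le hbdd i
        have := mul_le_mul_of_nonneg_right (ha i) (sub_nonneg.2 hxy.le)
        linarith

theorem tendsto_iInf_affine_atTop (hc : 0 < c) (ha : ∀ i, c ≤ a i) (hb : ∀ i, 0 ≤ b i) :
    Tendsto (fun x => ⨅ i, a i * x + b i) atTop atTop :=
  tendsto_atTop_mono' atTop
    (by filter_upwards [eventually_ge_atTop 0] with x hx using mul_le_iInf_affine ha hb hx)
    (tendsto_id.const_mul_atTop hc)

end AffineFamily

/-- Inverting `R = τ log₂ (1 + p)`: the energy a phase occupying the fraction `τ` of the frame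
needs to carry rate `R` through a channel of unit gain. -/
noncomputable def phasePower (R τ : ℝ) : ℝ := τ * ((2 : ℝ) ^ (R / τ) - 1)

theorem mul_log_two_le_phasePower (R : ℝ) {τ : ℝ} (hτ : 0 < τ) :
    R * log 2 ≤ phasePower R τ := by
  have h := add_one_le_exp (log 2 * (R / τ))
  rw [← rpow_def_of_pos two_pos] at h
  calc R * log 2 = τ * (log 2 * (R / τ)) := by field_simp
    _ ≤ phasePower R τ := by unfold phasePower; gcongr; linarith

theorem phasePower_nonneg {R τ : ℝ} (hR : 0 ≤ R) (hτ : 0 < τ) : 0 ≤ phasePower R τ :=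
  (mul_nonneg hR (log_pos one_lt_two).le).trans (mul_log_two_le_phasePower R hτ)

theorem two_phase_power_eq_affine (R β σ α s τ : ℝ) :
    τ * ((2 : ℝ) ^ (R / τ) - 1) * (s + σ) / β + (1 - τ) * ((2 : ℝ) ^ (R / (1 - τ)) - 1) / α
      = phasePower R τ / β * s + (phasePower R τ * σ / β + phasePower R (1 - τ) / α) := by
  unfold phasePower
  ring

/-- The optimized DF transmit power
`p*(s) = min_{τ∈(0,1)} [τ(2^{R̄/τ}−1)(s+σ²)/β_sr + (1−τ)(2^{R̄/(1−τ)}−1)/α₂]`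
(where `α₁(s) = β_sr/(s+σ²)` is the EMI-degraded first-hop gain) is strictly increasing and
unbounded in the EMI power `s = σ_emi²`, and grows at least linearly:
`p*(s) ≥ s ⋅ (min_τ τ(2^{R̄/τ}−1))/β_sr`. -/
theorem df_power_degrades_linearly_in_emi (βsr σ2 α2 Rbar : ℝ)
    (hβsr : 0 < βsr) (hσ2 : 0 < σ2) (hα2 : 0 < α2) (hR : 0 < Rbar) :
    (∀ s1 s2 : ℝ, 0 ≤ s1 → s1 < s2 →
      (⨅ τ : Set.Ioo (0:ℝ) 1, ((τ : ℝ) * ((2:ℝ) ^ (Rbar / (τ : ℝ)) - 1) * (s1 + σ2) / βsr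
          + (1 - (τ : ℝ)) * ((2:ℝ) ^ (Rbar / (1 - (τ : ℝ))) - 1) / α2))
        < (⨅ τ : Set.Ioo (0:ℝ) 1, ((τ : ℝ) * ((2:ℝ) ^ (Rbar / (τ : ℝ)) - 1) * (s2 + σ2) / βsr
          + (1 - (τ : ℝ)) * ((2:ℝ) ^ (Rbar / (1 - (τ : ℝ))) - 1) / α2))) ∧
    Filter.Tendsto (fun s : ℝ =>
        ⨅ τ : Set.Ioo (0:ℝ) 1, ((τ : ℝ) * ((2:ℝ) ^ (Rbar / (τ : ℝ)) - 1) * (s + σ2) / βsr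
          + (1 - (τ : ℝ)) * ((2:ℝ) ^ (Rbar / (1 - (τ : ℝ))) - 1) / α2))
      Filter.atTop Filter.atTop ∧
    (∀ s : ℝ, 0 ≤ s →
      s * (⨅ τ : Set.Ioo (0:ℝ) 1, (τ : ℝ) * ((2:ℝ) ^ (Rbar / (τ : ℝ)) - 1)) / βsr
        ≤ ⨅ τ : Set.Ioo (0:ℝ) 1, ((τ : ℝ) * ((2:ℝ) ^ (Rbar / (τ : ℝ)) - 1) * (s + σ2) / βsr
          + (1 - (τ : ℝ)) * ((2:ℝ) ^ (Rbar / (1 - (τ : ℝ))) - 1) / α2)) := by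
  simp only [two_phase_power_eq_affine]
  have : Nonempty (Set.Ioo (0:ℝ) 1) := ⟨⟨2⁻¹, by norm_num, by norm_num⟩⟩
  have hc : 0 < Rbar * log 2 / βsr := div_pos (mul_pos hR (log_pos one_lt_two)) hβsr
  have ha (τ : Set.Ioo (0:ℝ) 1) : Rbar * log 2 / βsr ≤ phasePower Rbar τ / βsr :=
    div_le_div_of_nonneg_right (mul_log_two_le_phasePower Rbar τ.2.1) hβsr.le
  have hb (τ : Set.Ioo (0:ℝ) 1) :
      0 ≤ phasePower Rbar τ * σ2 / βsr + phasePower Rbar (1 - τ) / α2 := by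
    have := phasePower_nonneg hR.le τ.2.1
    have := phasePower_nonneg hR.le (sub_pos.2 τ.2.2)
    positivity
  refine ⟨fun s1 s2 hs1 hlt => strictMonoOn_iInf_affine hc ha hb hs1 (hs1.trans hlt.le) hlt,
    tendsto_iInf_affine_atTop hc ha hb, fun s hs => ?_⟩
  have hbdd : BddBelow (Set.range fun τ : Set.Ioo (0:ℝ) 1 => phasePower Rbar τ) :=
    ⟨0, by rintro _ ⟨τ, rfl⟩; exact phasePower_nonneg hR.le τ.2.1⟩
  rw [mul_comm s, mul_div_right_comm]
  exact mul_le_iInf_affine (fun τ => div_le_div_of_nonneg_right (ciInf_le hbdd τ) hβsr.le) hb hs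
end
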